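/- arXiv:math/0506182 — 4 statements merged into one kernel-verified Lean document; each statement's English description precedes it below -/
import Mathlib

section
/- For positive reals r_i, r_j, r_k, r_ℓ, define Q = (1/r_i + 1/r_j + 1/r_k + 1/r_ℓ)² - 2(1/r_i² + 1/r_j² + 1/r_k² + 1/r_ℓ²). Then the Cayley–Menger determinant for the six edge lengths ℓ_ab = r_a + r_b yields a squared volume satisfying V² = (1/9) r_i² r_j² r_k² r_ℓ² Q. -/
/-! Writing `ℓ_ab² = (r_a + r_b)²`, the 5 × 5 Cayley–Menger determinant is, as a polynomial in
the radii, `32 Q(r_j r_k r_ℓ, r_i r_k r_ℓ, r_i r_j r_ℓ, r_i r_j r_k)` for the Descartes quadratic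
form `Q(a, b, c, d) = (a + b + c + d)² - 2 (a² + b² + c² + d²)`. Since `Q` is homogeneous of
degree two, pulling out the factor `r_i r_j r_k r_ℓ` turns this into
`32 (r_i r_j r_k r_ℓ)² Q(1/r_i, 1/r_j, 1/r_k, 1/r_ℓ)`, and `32 / 288 = 1 / 9`. -/

def descartesQuadratic {R : Type*} [CommRing R] (a b c d : R) : R :=
  (a + b + c + d) ^ 2 - 2 * (a ^ 2 + b ^ 2 + c ^ 2 + d ^ 2)

theorem descartesQuadratic_mul {R : Type*} [CommRing R] (t a b c d : R) :
    descartesQuadratic (t * a) (t * b) (t * c) (t * d) = t ^ 2 * descartesQuadratic a b c d := by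
  unfold descartesQuadratic
  ring

theorem prod_sq_mul_descartesQuadratic_inv {K : Type*} [Field K] {a b c d : K}
    (ha : a ≠ 0) (hb : b ≠ 0) (hc : c ≠ 0) (hd : d ≠ 0) :
    (a * b * c * d) ^ 2 * descartesQuadratic a⁻¹ b⁻¹ c⁻¹ d⁻¹ =
      descartesQuadratic (b * c * d) (a * c * d) (a * b * d) (a * b * c) := by
  rw [← descartesQuadratic_mul]
  congr 1 <;> field_simp

theorem det_cayleyMenger_conformal {R : Type*} [CommRing R] (ri rj rk rl : R) :
    Matrix.det !![0, 1, 1, 1, 1;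
        1, 0, (ri + rj) ^ 2, (ri + rk) ^ 2, (ri + rl) ^ 2;
        1, (ri + rj) ^ 2, 0, (rj + rk) ^ 2, (rj + rl) ^ 2;
        1, (ri + rk) ^ 2, (rj + rk) ^ 2, 0, (rk + rl) ^ 2;
        1, (ri + rl) ^ 2, (rj + rl) ^ 2, (rk + rl) ^ 2, 0] =
      32 * descartesQuadratic (rj * rk * rl) (ri * rk * rl) (ri * rj * rl) (ri * rj * rk) := by
  simp [Matrix.det_succ_row_zero, Fin.sum_univ_succ, Fin.succAbove, descartesQuadratic]
  ring

/-- The Cayley–Menger determinant of a conformal tetrahedron gives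
    V² = (1/9) ri² rj² rk² rl² Q where Q is the Descartes quadratic. -/
theorem conformal_tetrahedron_volume (ri rj rk rl : ℝ)
    (hi : 0 < ri) (hj : 0 < rj) (hk : 0 < rk) (hl : 0 < rl) :
    (Matrix.det !![0, 1, 1, 1, 1;
        1, 0, (ri + rj) ^ 2, (ri + rk) ^ 2, (ri + rl) ^ 2;
        1, (ri + rj) ^ 2, 0, (rj + rk) ^ 2, (rj + rl) ^ 2;
        1, (ri + rk) ^ 2, (rj + rk) ^ 2, 0, (rk + rl) ^ 2;
        1, (ri + rl) ^ 2, (rj + rl) ^ 2, (rk + rl) ^ 2, 0] : ℝ) / 288 =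
      (1 / 9) * ri ^ 2 * rj ^ 2 * rk ^ 2 * rl ^ 2 *
        ((1 / ri + 1 / rj + 1 / rk + 1 / rl) ^ 2 -
          2 * (1 / ri ^ 2 + 1 / rj ^ 2 + 1 / rk ^ 2 + 1 / rl ^ 2)) := by
  calc
    _ = 32 * descartesQuadratic (rj * rk * rl) (ri * rk * rl) (ri * rj * rl) (ri * rj * rk) / 288 :=
        by rw [det_cayleyMenger_conformal]
    _ = 1 / 9 * (ri * rj * rk * rl) ^ 2 * descartesQuadratic ri⁻¹ rj⁻¹ rk⁻¹ rl⁻¹ := by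
        rw [mul_assoc (1 / 9 : ℝ), prod_sq_mul_descartesQuadratic_inv hi.ne' hj.ne' hk.ne' hl.ne']
        ring
    _ = _ := by
        simp only [descartesQuadratic, one_div, inv_pow]
        ring
end

section
/- For positive reals r_i, r_j, r_k, r_ℓ, if Q_ijkℓ = (Σ 1/r_a)² - 2 Σ 1/r_a², and r_ijkℓ is defined by 4/r_ijkℓ² = Q_ijkℓ (assuming Q_ijkℓ > 0), then the squared height h² = r_ijkℓ² - r_ijk², where r_ijk² = r_i r_j r_k/(r_i + r_j + r_k), satisfies h² = (r_ijkℓ² r_ijk²/4)(1/r_i + 1/r_j + 1/r_k - 1/r_ℓ)². -/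
/-! With `a, b, c, d` the reciprocals of the weights, `Q` is `4 (ab + bc + ca) - (a + b + c - d)²`,
and `ab + bc + ca` is the reciprocal of the squared face inradius `r_ijk²`.
Substituting `Q = 4 / r_ijkℓ²` then gives the height formula by clearing denominators. -/

theorem sq_add_add_add_sub_two_mul_sum_sq {R : Type*} [CommRing R] (a b c d : R) :
    (a + b + c + d) ^ 2 - 2 * (a ^ 2 + b ^ 2 + c ^ 2 + d ^ 2) =
      4 * (a * b + b * c + c * a) - (a + b + c - d) ^ 2 := by
  ring

theorem one_div_mul_add_one_div_mul_add_one_div_mul {K : Type*} [Field K] {x y z : K}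
    (hx : x ≠ 0) (hy : y ≠ 0) (hz : z ≠ 0) :
    1 / x * (1 / y) + 1 / y * (1 / z) + 1 / z * (1 / x) = (x * y * z / (x + y + z))⁻¹ := by
  rw [inv_div]
  field_simp
  ring

theorem sub_eq_of_mul_eq_four_of_eq_sub {K : Type*} [Field K] [CharZero K] {R F Q e : K}
    (hF : F ≠ 0) (hRQ : R * Q = 4) (hQ : Q = 4 * F⁻¹ - e) : R - F = R * F / 4 * e := by
  have hFF : F * F⁻¹ = 1 := mul_inv_cancel₀ hF
  linear_combination (F / 4) * hRQ - (R * F / 4) * hQ - R * hFF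

theorem conformal_tetrahedron_height_sq_general (ri rj rk rl : ℝ)
    (hi : 0 < ri) (hj : 0 < rj) (hk : 0 < rk)
    (Q : ℝ)
    (hQdef : Q = (1 / ri + 1 / rj + 1 / rk + 1 / rl) ^ 2 -
      2 * (1 / ri ^ 2 + 1 / rj ^ 2 + 1 / rk ^ 2 + 1 / rl ^ 2))
    (rfour : ℝ) (hr4 : 4 / rfour ^ 2 = Q) (hr4pos : 0 < rfour) :
    rfour ^ 2 - ri * rj * rk / (ri + rj + rk) =
      (rfour ^ 2 * (ri * rj * rk / (ri + rj + rk)) / 4) *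
        (1 / ri + 1 / rj + 1 / rk - 1 / rl) ^ 2 := by
  have hRQ : rfour ^ 2 * Q = 4 := by
    rw [← hr4]
    field_simp
  refine sub_eq_of_mul_eq_four_of_eq_sub (by positivity) hRQ ?_
  rw [hQdef, ← one_div_mul_add_one_div_mul_add_one_div_mul hi.ne' hj.ne' hk.ne',
    ← sq_add_add_add_sub_two_mul_sum_sq]
  ring

/-- Squared height from the center of the edge-tangent sphere to a face of a
    conformal tetrahedron. -/
theorem conformal_tetrahedron_height_sq (ri rj rk rl : ℝ)
    (hi : 0 < ri) (hj : 0 < rj) (hk : 0 < rk) (hl : 0 < rl)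
    (Q : ℝ)
    (hQdef : Q = (1 / ri + 1 / rj + 1 / rk + 1 / rl) ^ 2 -
      2 * (1 / ri ^ 2 + 1 / rj ^ 2 + 1 / rk ^ 2 + 1 / rl ^ 2))
    (hQ : 0 < Q)
    (rfour : ℝ) (hr4 : 4 / rfour ^ 2 = Q) (hr4pos : 0 < rfour) :
    rfour ^ 2 - ri * rj * rk / (ri + rj + rk) =
      (rfour ^ 2 * (ri * rj * rk / (ri + rj + rk)) / 4) *
        (1 / ri + 1 / rj + 1 / rk - 1 / rl) ^ 2 :=
  conformal_tetrahedron_height_sq_general ri rj rk rl hi hj hk Q hQdef rfour hr4 hr4pos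
end

section
/- Let r_i(t) > 0 for i in a finite set S₀ satisfy dr_i/dt = -K_i r_i, where K_i = K_i(t) are differentiable with dK_i/dt = (ΔK)_i, and assume the identity Σ_i (ΔK)_i r_i = 0. Let k(t) = (Σ K_i r_i)/(Σ r_i). Then dk/dt = -[Σ_i Σ_j (K_i - K_j)² r_i r_j] / [2(Σ_i r_i)²] ≤ 0. -/
lemma key_expand {S₀ : Type*} [Fintype S₀] (a b : S₀ → ℝ) :
    ∑ i, ∑ j, (a i - a j) ^ 2 * b i * b j =
      2 * (∑ i, b i) * (∑ i, a i ^ 2 * b i) - 2 * (∑ i, a i * b i) ^ 2 := by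
  have h1 : ∑ i, ∑ j, (a i ^ 2 * b i) * b j
      = (∑ i, a i ^ 2 * b i) * (∑ j, b j) := (Finset.sum_mul_sum _ _ _ _).symm
  have h2 : ∑ i, ∑ j, (a i * b i) * (2 * (a j * b j))
      = (∑ i, a i * b i) * (∑ j, 2 * (a j * b j)) := (Finset.sum_mul_sum _ _ _ _).symm
  have h3 : ∑ i, ∑ j, b i * (a j ^ 2 * b j)
      = (∑ i, b i) * (∑ j, a j ^ 2 * b j) := (Finset.sum_mul_sum _ _ _ _).symm
  have hstep : ∀ i j : S₀, (a i - a j) ^ 2 * b i * b j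
      = (a i ^ 2 * b i) * b j + b i * (a j ^ 2 * b j) - (a i * b i) * (2 * (a j * b j)) := by
    intro i j; ring
  simp only [hstep, Finset.sum_sub_distrib, Finset.sum_add_distrib, ← Finset.mul_sum,
    ← Finset.sum_mul]
  ring

/-- Under the combinatorial Yamabe flow, the average scalar curvature
    k = (Σ Kᵢ rᵢ)/(Σ rᵢ) is nonincreasing, with
    dk/dt = -[Σᵢ Σⱼ (Kᵢ - Kⱼ)² rᵢ rⱼ] / (2 (Σ rᵢ)²) ≤ 0. -/
theorem average_curvature_decreasing {S₀ : Type*} [Fintype S₀] [Nonempty S₀]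
    (r K : S₀ → ℝ → ℝ) (K' : S₀ → ℝ) (t : ℝ)
    (hrpos : ∀ i s, 0 < r i s)
    (hflow : ∀ i, HasDerivAt (r i) (-(K i t) * r i t) t)
    (hKdiff : ∀ i, HasDerivAt (K i) (K' i) t)
    (hSchlafli : ∑ i, r i t * K' i = 0) :
    HasDerivAt (fun s => (∑ i, K i s * r i s) / (∑ i, r i s))
        (-(∑ i, ∑ j, (K i t - K j t) ^ 2 * r i t * r j t) /
          (2 * (∑ i, r i t) ^ 2)) t ∧
      -(∑ i, ∑ j, (K i t - K j t) ^ 2 * r i t * r j t) /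
          (2 * (∑ i, r i t) ^ 2) ≤ 0 := by
  have hBpos : 0 < ∑ i, r i t := Finset.sum_pos (fun i _ => hrpos i t) Finset.univ_nonempty
  have hBne : (∑ i, r i t) ≠ 0 := ne_of_gt hBpos
  have hA : HasDerivAt (fun s => ∑ i, K i s * r i s)
      (∑ i, (K' i * r i t + K i t * (-(K i t) * r i t))) t :=
    HasDerivAt.fun_sum (fun i _ => (hKdiff i).mul (hflow i))
  have hBd : HasDerivAt (fun s => ∑ i, r i s) (∑ i, -(K i t) * r i t) t :=
    HasDerivAt.fun_sum (fun i _ => hflow i)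
  have hdiv := hA.div hBd hBne
  have hderiv_eq :
      ((∑ i, (K' i * r i t + K i t * (-(K i t) * r i t))) * (∑ i, r i t)
        - (∑ i, K i t * r i t) * ∑ i, -(K i t) * r i t) / (∑ i, r i t) ^ 2
      = -(∑ i, ∑ j, (K i t - K j t) ^ 2 * r i t * r j t) / (2 * (∑ i, r i t) ^ 2) := by
    rw [key_expand (fun i => K i t) (fun i => r i t)]
    have hs : ∑ i, K' i * r i t = 0 := by
      rw [← hSchlafli]; exact Finset.sum_congr rfl fun i _ => mul_comm _ _
    rw [Finset.sum_add_distrib, hs]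
    have e1 : ∑ i, K i t * (-(K i t) * r i t) = -∑ i, (K i t) ^ 2 * r i t := by
      rw [← Finset.sum_neg_distrib]; exact Finset.sum_congr rfl fun i _ => by ring
    have e2 : ∑ i, -(K i t) * r i t = -∑ i, K i t * r i t := by
      rw [← Finset.sum_neg_distrib]; exact Finset.sum_congr rfl fun i _ => by ring
    rw [e1, e2]
    field_simp
    ring
  refine ⟨hderiv_eq ▸ hdiv, ?_⟩
  apply div_nonpos_of_nonpos_of_nonneg
  · rw [neg_nonpos]
    apply Finset.sum_nonneg; intro i _
    apply Finset.sum_nonneg; intro j _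
    exact mul_nonneg (mul_nonneg (sq_nonneg _) (hrpos i t).le) (hrpos j t).le
  · positivity
end

section
/- For positive reals r_i, r_j, r_k, r_ℓ with Q_ijkℓ > 0, the quantity ∂α_ijkℓ/∂r_i as given by formula (with P_abc = 2(r_a+r_b+r_c) and V = (1/3) r_i r_j r_k r_ℓ sqrt(Q_ijkℓ)): -(8 r_j² r_k² r_ℓ²)/(3 P_ijk P_ijℓ P_ikℓ V) · [(2/r_i + 1/r_j + 1/r_k + 1/r_ℓ) + (r_j/r_i)(1/r_i + 1/r_k + 1/r_ℓ) + (r_k/r_i)(1/r_i + 1/r_j + 1/r_ℓ) + (r_ℓ/r_i)(1/r_i + 1/r_j + 1/r_k) + (2r_i + r_j + r_k + r_ℓ) Q_ijkℓ] is strictly negative. -/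
/-- The partial derivative ∂α_ijkl/∂rᵢ of the solid angle, as given by the
    explicit formula, is strictly negative for a nondegenerate conformal
    tetrahedron. -/
theorem solid_angle_derivative_negative (ri rj rk rl : ℝ)
    (hi : 0 < ri) (hj : 0 < rj) (hk : 0 < rk) (hl : 0 < rl)
    (Q : ℝ)
    (hQdef : Q = (1 / ri + 1 / rj + 1 / rk + 1 / rl) ^ 2 -
      2 * (1 / ri ^ 2 + 1 / rj ^ 2 + 1 / rk ^ 2 + 1 / rl ^ 2))
    (hQ : 0 < Q) :
    -(8 * rj ^ 2 * rk ^ 2 * rl ^ 2) /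
        (3 * (2 * (ri + rj + rk)) * (2 * (ri + rj + rl)) * (2 * (ri + rk + rl)) *
          ((1 / 3) * ri * rj * rk * rl * Real.sqrt Q)) *
      ((2 / ri + 1 / rj + 1 / rk + 1 / rl) +
        (rj / ri) * (1 / ri + 1 / rk + 1 / rl) +
        (rk / ri) * (1 / ri + 1 / rj + 1 / rl) +
        (rl / ri) * (1 / ri + 1 / rj + 1 / rk) +
        (2 * ri + rj + rk + rl) * Q) < 0 := by
  have hs : 0 < Real.sqrt Q := Real.sqrt_pos.mpr hQ
  apply mul_neg_of_neg_of_pos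
  · apply div_neg_of_neg_of_pos
    · exact neg_neg_of_pos (by positivity)
    · positivity
  · positivity
end
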